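/- Let A > 0, B ≤ 0 with A + B > 0, let δ̄_K > 0 be the unique positive solution of A·x + x/(1+x) = c/K for fixed c > 0 and integer K ≥ 1. Then: (i) δ̄_K is strictly decreasing in K; (ii) K·δ̄_K = c/(A + 1/(1+δ̄_K)) is strictly decreasing in K; and (iii) the quantity γ_K := K·δ̄_K/(1 + B/(A + (1+δ̄_K)^{-2})) satisfies γ_K ≥ γ_{K+1} for all K ≥ 1. -/

import Mathlib

/-! The fixed point `δ̄_K` solves `f(δ̄_K) = c/K` for the strictly increasing map
`f x = A x + x/(1+x)`, so it decreases with `K`. Rewriting the equation as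
`K δ̄_K = c/(A + 1/(1+δ̄_K))` shows that `K δ̄_K` is a strictly increasing function of `δ̄_K`,
hence also decreases. Finally, for `B ≤ 0` the denominator `1 + B/(A + (1+x)⁻²)` of the SINR
is positive and decreasing in `x`, so it grows with `K` while the numerator `K δ̄_K` shrinks. -/

open Set

theorem strictMonoOn_mul_add_div_one_add {A : ℝ} (hA : 0 ≤ A) :
    StrictMonoOn (fun x : ℝ => A * x + x / (1 + x)) (Ioi (-1)) := by
  intro x hx y hy hxy
  simp only [mem_Ioi] at hx hy
  have hfrac : x / (1 + x) < y / (1 + y) := by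
    rw [div_lt_div_iff₀ (by linarith) (by linarith)]
    linarith
  exact add_lt_add_of_le_of_lt (mul_le_mul_of_nonneg_left hxy.le hA) hfrac

theorem mul_add_div_one_add_eq_mul {A x : ℝ} (hx : 1 + x ≠ 0) :
    A * x + x / (1 + x) = x * (A + 1 / (1 + x)) := by
  field_simp

theorem strictMonoOn_div_add_one_div_one_add {A c : ℝ} (hA : 0 ≤ A) (hc : 0 < c) :
    StrictMonoOn (fun x : ℝ => c / (A + 1 / (1 + x))) (Ioi (-1)) := by
  intro x hx y hy hxy
  simp only [mem_Ioi] at hx hy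
  have hinv : 1 / (1 + y) < 1 / (1 + x) := one_div_lt_one_div_of_lt (by linarith) (by linarith)
  have hpos : 0 < A + 1 / (1 + y) := by
    have : 0 < 1 + y := by linarith
    positivity
  exact div_lt_div_of_pos_left hc hpos (by linarith)

theorem one_add_div_add_inv_one_add_sq_pos {A B : ℝ} (hB : B ≤ 0) (hAB : 0 < A + B) (x : ℝ) :
    0 < 1 + B / (A + (1 + x)⁻¹ ^ 2) := by
  have hden : 0 < A + (1 + x)⁻¹ ^ 2 := by nlinarith [sq_nonneg (1 + x)⁻¹]
  rw [one_add_div hden.ne']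
  exact div_pos (by nlinarith [sq_nonneg (1 + x)⁻¹]) hden

theorem antitoneOn_one_add_div_add_inv_one_add_sq {A B : ℝ} (hA : 0 ≤ A) (hB : B ≤ 0) :
    AntitoneOn (fun x : ℝ => 1 + B / (A + (1 + x)⁻¹ ^ 2)) (Ioi (-1)) := by
  intro x hx y hy hxy
  simp only [mem_Ioi] at hx hy
  have hinv : (1 + y)⁻¹ ≤ (1 + x)⁻¹ := inv_anti₀ (by linarith) (by linarith)
  have hsq : (1 + y)⁻¹ ^ 2 ≤ (1 + x)⁻¹ ^ 2 :=
    pow_le_pow_left₀ (inv_nonneg.mpr (by linarith)) hinv 2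
  have hposy : 0 < A + (1 + y)⁻¹ ^ 2 := by
    have : 0 < 1 + y := by linarith
    positivity
  have hdiv : (-B) / (A + (1 + x)⁻¹ ^ 2) ≤ (-B) / (A + (1 + y)⁻¹ ^ 2) :=
    div_le_div_of_nonneg_left (by linarith) hposy (by linarith)
  simp only [neg_div] at hdiv
  linarith

/-- Let `A > 0`, `B ≤ 0`, `A + B > 0`, `c > 0` and for each `K ≥ 1` let
`δ̄_K > 0` be the unique positive solution of `A·x + x/(1+x) = c/K`. Then
(i) `δ̄_K` strictly decreases in `K`; (ii) `K·δ̄_K = c/(A + 1/(1+δ̄_K))` and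
`K·δ̄_K` strictly decreases in `K`; (iii) the SINR
`γ_K = K·δ̄_K/(1 + B/(A + (1+δ̄_K)⁻²))` satisfies `γ_K ≥ γ_{K+1}`. -/
theorem sinr_decreasing_in_clusters (A B c : ℝ) (hA : 0 < A) (hB : B ≤ 0)
    (hAB : 0 < A + B) (hc : 0 < c) (d : ℕ → ℝ)
    (hd : ∀ K : ℕ, 1 ≤ K → 0 < d K ∧ A * d K + d K / (1 + d K) = c / K) :
    (∀ K : ℕ, 1 ≤ K → d (K + 1) < d K) ∧
    (∀ K : ℕ, 1 ≤ K → (K : ℝ) * d K = c / (A + 1 / (1 + d K)) ∧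
      ((K : ℝ) + 1) * d (K + 1) < (K : ℝ) * d K) ∧
    (∀ K : ℕ, 1 ≤ K →
      ((K : ℝ) + 1) * d (K + 1) / (1 + B / (A + (1 + d (K + 1))⁻¹ ^ 2))
        ≤ (K : ℝ) * d K / (1 + B / (A + (1 + d K)⁻¹ ^ 2))) := by
  have hmem : ∀ K : ℕ, 1 ≤ K → d K ∈ Ioi (-1) := fun K hK => by
    simp only [mem_Ioi]; linarith [(hd K hK).1]
  have hdec : ∀ K : ℕ, 1 ≤ K → d (K + 1) < d K := by
    intro K hK
    have hKpos : (0 : ℝ) < K := by exact_mod_cast hK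
    refine (strictMonoOn_mul_add_div_one_add hA.le).lt_iff_lt (hmem _ (by omega)) (hmem K hK)
      |>.mp ?_
    simp only [(hd K hK).2, (hd (K + 1) (by omega)).2, Nat.cast_add_one]
    exact div_lt_div_of_pos_left hc hKpos (by linarith)
  have hform : ∀ K : ℕ, 1 ≤ K → (K : ℝ) * d K = c / (A + 1 / (1 + d K)) := by
    intro K hK
    have hKpos : (0 : ℝ) < K := by exact_mod_cast hK
    have hx : 0 < 1 + d K := by linarith [(hd K hK).1]
    rw [eq_div_iff (by positivity), mul_assoc, ← mul_add_div_one_add_eq_mul hx.ne', (hd K hK).2,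
      mul_div_cancel₀ c hKpos.ne']
  have hKd : ∀ K : ℕ, 1 ≤ K → ((K : ℝ) + 1) * d (K + 1) < (K : ℝ) * d K := by
    intro K hK
    have h := hform (K + 1) (by omega)
    push_cast at h
    rw [h, hform K hK]
    exact strictMonoOn_div_add_one_div_one_add hA.le hc (hmem _ (by omega)) (hmem K hK)
      (hdec K hK)
  refine ⟨hdec, fun K hK => ⟨hform K hK, hKd K hK⟩, fun K hK => ?_⟩
  have hdK := (hd K hK).1
  exact div_le_div₀ (by positivity) (hKd K hK).le
    (one_add_div_add_inv_one_add_sq_pos hB hAB _)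
    (antitoneOn_one_add_div_add_inv_one_add_sq hA.le hB (hmem _ (by omega)) (hmem K hK)
      (hdec K hK).le)
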